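/- arXiv:2402.02840 — 2 statements merged into one kernel-verified Lean document; each statement's English description precedes it below -/
import Mathlib

section
/- Let r ≥ 2, let A ∈ M_2(𝔬_{ℓ'}) be cyclic, let ρ ∈ Irr(GL_2(𝔬_r) | ψ_A), and let φ ∈ Irr(C_{GL_2(𝔬_r)}(ψ_A) | ψ_A) be such that ρ ≅ Ind_{C_{GL_2(𝔬_r)}(ψ_A)}^{GL_2(𝔬_r)}(φ). Then the restriction of ρ to SL_2(𝔬_r) is isomorphic to the direct sum over d ∈ 𝒟_A of Ind_{C_{SL_2(𝔬_r)}(ψ_{A_d})}^{SL_2(𝔬_r)}(φ^d). -/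
open Matrix

noncomputable section

/-- A (complex) representation of a group `G`, bundled with its carrier space. -/
structure Rep' (G : Type) [Group G] : Type 1 where
  V : Type
  [instAdd : AddCommGroup V]
  [instMod : Module ℂ V]
  ρ : Representation ℂ G V

attribute [instance] Rep'.instAdd Rep'.instMod

namespace Rep'

variable {G H : Type} [Group G] [Group H]

/-- The dimension of a representation. -/
def dim (W : Rep' G) : ℕ := Module.finrank ℂ W.V

/-- Equivalence (isomorphism) of representations. -/
def Iso (W₁ W₂ : Rep' G) : Prop :=
  ∃ e : W₁.V ≃ₗ[ℂ] W₂.V, ∀ (g : G) (v : W₁.V), e (W₁.ρ g v) = W₂.ρ g (e v)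

/-- A representation is irreducible if it is nonzero and has no proper nonzero
invariant subspace. -/
def IsIrreducible (W : Rep' G) : Prop :=
  (∃ v : W.V, v ≠ 0) ∧
    ∀ p : Submodule ℂ W.V, (∀ (g : G) (v : W.V), v ∈ p → W.ρ g v ∈ p) → p = ⊥ ∨ p = ⊤

/-- Restriction of a representation along a group homomorphism (e.g. the inclusion
of a subgroup). -/
def res (W : Rep' G) (f : H →* G) : Rep' H where
  V := W.V
  ρ := W.ρ.comp f

/-- `W.IsConstituentOf V` : `W` is an irreducible constituent of `V`, i.e. `W` is
irreducible and there is a nonzero `G`-equivariant map `W → V`. -/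
def IsConstituentOf (W V : Rep' G) : Prop :=
  W.IsIrreducible ∧
    ∃ f : W.V →ₗ[ℂ] V.V, f ≠ 0 ∧ ∀ (g : G) (w : W.V), f (W.ρ g w) = V.ρ g (f w)

/-- External direct sum of a family of representations. -/
def pi {ι : Type} (c : ι → Rep' G) : Rep' G where
  V := ∀ i, (c i).V
  ρ :=
    { toFun := fun g => LinearMap.pi fun i => ((c i).ρ g).comp (LinearMap.proj i)
      map_one' := by ext f i; simp
      map_mul' := fun g h => by ext f i; simp [Module.End.mul_apply] }

/-- `V` decomposes as a direct sum of `n` irreducible representations. -/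
def DecomposesInto (V : Rep' G) (n : ℕ) : Prop :=
  ∃ c : Fin n → Rep' G, (∀ i, (c i).IsIrreducible) ∧ V.Iso (pi c)

end Rep'

/-- The one-dimensional representation attached to a `ℂˣ`-valued character. -/
def charRep {G : Type} [Group G] (χ : G →* ℂˣ) : Rep' G where
  V := ℂ
  ρ :=
    { toFun := fun g => (χ g : ℂ) • LinearMap.id
      map_one' := by simp; rfl
      map_mul' := fun g h => by
        ext
        simp [Module.End.mul_apply, smul_smul, mul_comm] }

section Induction

variable {G : Type} [Group G] (H : Subgroup G) (φ : Rep' H)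

/-- The space of the representation induced from a subgroup: functions `f : G → V`
with `f (h * g) = φ h (f g)`. -/
def indSubmodule : Submodule ℂ (G → φ.V) where
  carrier := {f | ∀ (h : H) (g : G), f (↑h * g) = φ.ρ h (f g)}
  add_mem' := by intro f g hf hg h x; simp [hf h x, hg h x]
  zero_mem' := by intro h x; simp
  smul_mem' := by intro c f hf h x; simp [hf h x]

/-- The representation of `G` induced from the representation `φ` of the subgroup `H`. -/
def Rep'.ind : Rep' G where
  V := ↥(indSubmodule H φ)
  ρ :=
    { toFun := fun g =>
        { toFun := fun f =>
            ⟨fun x => (f : G → φ.V) (x * g), by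
              intro h y
              have := f.2 h (y * g)
              simpa [mul_assoc] using this⟩
          map_add' := fun f₁ f₂ => by ext x; simp
          map_smul' := fun c f => by ext x; simp }
      map_one' := by ext f x; simp
      map_mul' := fun g₁ g₂ => by
        ext f x
        simp [Module.End.mul_apply, mul_assoc] }

end Induction


variable {o : Type} [CommRing o]

/-- The finite quotient `𝔬/𝔭^m = 𝔬/(π^m)` of a discrete valuation ring `𝔬` with
uniformizer `π`. -/
abbrev O (π : o) (m : ℕ) : Type := o ⧸ (Ideal.span {π ^ m})

/-- The image of the uniformizer `π` in `𝔬/𝔭^m`. -/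
def Ounif (π : o) (m : ℕ) : O π m := Ideal.Quotient.mk _ π

/-- The reduction map `𝔬/𝔭^r → 𝔬/𝔭^s` for `s ≤ r`. -/
def redMap (π : o) (r s : ℕ) (h : s ≤ r) : O π r →+* O π s :=
  Ideal.Quotient.factor (Ideal.span_singleton_le_span_singleton.mpr (pow_dvd_pow π h))

/-- The `i`-th congruence subgroup `M^i = I + π^i M_2(𝔬_r)` of `GL_2(𝔬_r)`. -/
def Mgrp (π : o) (r i : ℕ) : Subgroup (GL (Fin 2) (O π r)) where
  carrier := {g | ∃ B : Matrix (Fin 2) (Fin 2) (O π r),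
    (g : Matrix (Fin 2) (Fin 2) (O π r)) = 1 + (Ounif π r) ^ i • B}
  one_mem' := ⟨0, by simp⟩
  mul_mem' := by
    rintro a b ⟨B, hB⟩ ⟨C, hC⟩
    refine ⟨B + C + (Ounif π r) ^ i • (B * C), ?_⟩
    rw [Units.val_mul, hB, hC]
    simp only [add_mul, mul_add, one_mul, mul_one, smul_add, Matrix.smul_mul,
      Matrix.mul_smul, smul_smul]
    abel
  inv_mem' := by
    rintro a ⟨B, hB⟩
    refine ⟨-(B * ((a⁻¹ : GL (Fin 2) (O π r)) : Matrix (Fin 2) (Fin 2) (O π r))), ?_⟩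
    have h1 := Units.mul_inv a
    rw [hB, add_mul, one_mul] at h1
    have h2 := eq_sub_of_add_eq h1
    rw [smul_neg, ← sub_eq_add_neg, ← Matrix.smul_mul]
    exact h2

instance Mgrp_normal (π : o) (r i : ℕ) : (Mgrp π r i).Normal := by
  constructor
  rintro n ⟨B, hB⟩ g
  refine ⟨(g : Matrix (Fin 2) (Fin 2) (O π r)) * B *
    ((g⁻¹ : GL (Fin 2) (O π r)) : Matrix (Fin 2) (Fin 2) (O π r)), ?_⟩
  rw [Units.val_mul, Units.val_mul, hB]
  rw [mul_add, mul_one, add_mul, Units.mul_inv, Matrix.mul_smul, Matrix.smul_mul,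
    mul_assoc]

/-- `SL_n` as the subgroup of determinant-one elements of `GL_n`. -/
def SLsub (R : Type) [CommRing R] (n : Type) [DecidableEq n] [Fintype n] :
    Subgroup (GL n R) :=
  (Matrix.GeneralLinearGroup.det : GL n R →* Rˣ).ker

/-- Extension of a character of a subgroup by zero to the whole group. -/
def extChar {G : Type} [Group G] (N : Subgroup G) (χ : N →* ℂˣ) (g : G) : ℂ :=
  letI := Classical.dec (g ∈ N)
  if h : g ∈ N then χ ⟨g, h⟩ else 0

/-- The inertia group `C_G(χ)` of a character `χ` of a subgroup `N ≤ G`: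
the set of `g ∈ G` such that the `g`-conjugate of `χ` equals `χ`. -/
def inertia {G : Type} [Group G] (N : Subgroup G) (χ : N →* ℂˣ) : Subgroup G where
  carrier := {g | ∀ x : G, extChar N χ (g * x * g⁻¹) = extChar N χ x}
  one_mem' := by intro x; simp
  mul_mem' := by
    intro a b ha hb x
    have e : a * b * x * (a * b)⁻¹ = a * (b * x * b⁻¹) * a⁻¹ := by group
    rw [e, ha (b * x * b⁻¹), hb x]
  inv_mem' := by
    intro a ha x
    have h := ha (a⁻¹ * x * a)
    have e : a * (a⁻¹ * x * a) * a⁻¹ = x := by group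
    rw [e] at h
    have e2 : a⁻¹ * x * (a⁻¹)⁻¹ = a⁻¹ * x * a := by rw [inv_inv]
    rw [e2]
    exact h.symm

lemma mem_inertia {G : Type} [Group G] {N : Subgroup G} {χ : N →* ℂˣ} {g : G} :
    g ∈ inertia N χ ↔ ∀ x : G, extChar N χ (g * x * g⁻¹) = extChar N χ x :=
  Iff.rfl

/-- The conjugate `χ^t : n ↦ χ (t⁻¹ n t)` of a character `χ` of a normal subgroup. -/
def conjChar {G : Type} [Group G] {N : Subgroup G} [N.Normal] (χ : N →* ℂˣ) (t : G) :
    N →* ℂˣ :=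
  χ.comp (MulAut.conjNormal t⁻¹).toMonoidHom

lemma extChar_conjChar {G : Type} [Group G] {N : Subgroup G} [hN : N.Normal]
    (χ : N →* ℂˣ) (t : G) (x : G) :
    extChar N (conjChar χ t) x = extChar N χ (t⁻¹ * x * t) := by
  unfold extChar
  by_cases h : x ∈ N
  · have h' : t⁻¹ * x * t ∈ N := by simpa using hN.conj_mem x h t⁻¹
    rw [dif_pos h, dif_pos h']
    congr 1
    unfold conjChar
    simp only [MonoidHom.comp_apply, MulEquiv.toMonoidHom_eq_coe, MonoidHom.coe_coe]
    congr 1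
    ext
    simp [MulAut.conjNormal_apply]
  · have h' : ¬ (t⁻¹ * x * t ∈ N) := by
      intro hc
      have hc2 := hN.conj_mem _ hc t
      have e : t * (t⁻¹ * x * t) * t⁻¹ = x := by group
      rw [e] at hc2
      exact h hc2
    rw [dif_neg h, dif_neg h']

lemma mem_inertia_conjChar {G : Type} [Group G] {N : Subgroup G} [N.Normal]
    {χ : N →* ℂˣ} {t g : G} :
    g ∈ inertia N (conjChar χ t) ↔ t⁻¹ * g * t ∈ inertia N χ := by
  rw [mem_inertia, mem_inertia]
  constructor
  · intro hg x
    have h := hg (t * x * t⁻¹)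
    rw [extChar_conjChar, extChar_conjChar] at h
    have e1 : t⁻¹ * (g * (t * x * t⁻¹) * g⁻¹) * t =
        (t⁻¹ * g * t) * x * (t⁻¹ * g * t)⁻¹ := by group
    have e2 : t⁻¹ * (t * x * t⁻¹) * t = x := by group
    rw [e1, e2] at h
    exact h
  · intro hg x
    rw [extChar_conjChar, extChar_conjChar]
    have h := hg (t⁻¹ * x * t)
    have e1 : t⁻¹ * (g * x * g⁻¹) * t =
        (t⁻¹ * g * t) * (t⁻¹ * x * t) * (t⁻¹ * g * t)⁻¹ := by group
    rw [e1]
    exact h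

/-- The canonical homomorphism `H.subgroupOf K → H`. -/
def subgroupOfHom {G : Type} [Group G] (H K : Subgroup G) : (H.subgroupOf K) →* H where
  toFun x := ⟨((x : K) : G), Subgroup.mem_subgroupOf.mp x.2⟩
  map_one' := by ext; rfl
  map_mul' a b := by ext; rfl

/-- The centralizer of a matrix `A` inside `GL_n(R)`. -/
def matCentralizer (R : Type) [CommRing R] {n : Type} [DecidableEq n] [Fintype n]
    (A : Matrix n n R) : Subgroup (GL n R) where
  carrier := {g | A * (g : Matrix n n R) = (g : Matrix n n R) * A}
  one_mem' := by simp
  mul_mem' := by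
    intro a b ha hb
    have ha' : Commute A ((a : GL n R) : Matrix n n R) := ha
    have hb' : Commute A ((b : GL n R) : Matrix n n R) := hb
    show A * ((a * b : GL n R) : Matrix n n R) = ((a * b : GL n R) : Matrix n n R) * A
    rw [Units.val_mul]
    exact ha'.mul_right hb'
  inv_mem' := by
    intro a ha
    have ha' : Commute A ((a : GL n R) : Matrix n n R) := ha
    exact ha'.units_inv_right

/-- A `2 × 2` matrix over `R` is cyclic if some vector `v` together with `Av`
generates `R²`. -/
def IsCyclicMat {R : Type} [CommRing R] (A : Matrix (Fin 2) (Fin 2) R) : Prop :=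
  ∃ v : Fin 2 → R, Submodule.span R {v, A.mulVec v} = ⊤

/-- The diagonal matrix `diag(d, 1)` as an element of `GL_2(R)`. -/
def diagGL {R : Type} [CommRing R] (d : Rˣ) : GL (Fin 2) R where
  val := Matrix.diagonal ![(d : R), 1]
  inv := Matrix.diagonal ![((d⁻¹ : Rˣ) : R), 1]
  val_inv := by
    rw [Matrix.diagonal_mul_diagonal]
    have h : (fun i => ![(d : R), 1] i * ![((d⁻¹ : Rˣ) : R), 1] i) = fun _ => (1 : R) := by
      funext i
      fin_cases i <;> simp
    rw [h]
    exact Matrix.diagonal_one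
  inv_val := by
    rw [Matrix.diagonal_mul_diagonal]
    have h : (fun i => ![((d⁻¹ : Rˣ) : R), 1] i * ![(d : R), 1] i) = fun _ => (1 : R) := by
      funext i
      fin_cases i <;> simp
    rw [h]
    exact Matrix.diagonal_one

section Extra

variable {o : Type} [CommRing o]

/-- `χ` is the character `ψ_A` of the congruence subgroup `M^ℓ ≤ GL_2(𝔬_r)`
(`ℓ = ⌈r/2⌉`) attached to the additive character `ψ` and the lift `Ã ∈ M_2(𝔬_r)`
of `A ∈ M_2(𝔬_{ℓ'})`, i.e. `χ (1 + π^ℓ B) = ψ (π^ℓ · trace (Ã B))`. -/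
def IsPsiChar (π : o) (r : ℕ) (ψ : AddChar (O π r) ℂ)
    (Atil : Matrix (Fin 2) (Fin 2) (O π r)) (χ : (Mgrp π r ((r + 1) / 2)) →* ℂˣ) : Prop :=
  ∀ (g : (Mgrp π r ((r + 1) / 2))) (B : Matrix (Fin 2) (Fin 2) (O π r)),
    ((g : GL (Fin 2) (O π r)) : Matrix (Fin 2) (Fin 2) (O π r)) =
      1 + (Ounif π r) ^ ((r + 1) / 2) • B →
    (χ g : ℂ) = ψ ((Ounif π r) ^ ((r + 1) / 2) * Matrix.trace (Atil * B))

/-- `ρ` belongs to `Irr(G ∣ χ)`: `ρ` is an irreducible constituent of the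
representation of `G` induced from the character `χ` of the subgroup `H`. -/
def MemIrrOver {G : Type} [Group G] (H : Subgroup G) (χ : H →* ℂˣ) (ρ : Rep' G) : Prop :=
  ρ.IsConstituentOf (Rep'.ind H (charRep χ))

/-- `ρ` is a regular representation of `GL_2(𝔬_r)`: it is irreducible, and any
character `ψ_A` of `M^ℓ` occurring in the restriction of `ρ` to `M^ℓ`
has `A ∈ M_2(𝔬_{ℓ'})` cyclic. -/
def IsRegularRep (π : o) (r : ℕ) (ψ : AddChar (O π r) ℂ)
    (ρ : Rep' (GL (Fin 2) (O π r))) : Prop :=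
  ρ.IsIrreducible ∧
    ∀ (Atil : Matrix (Fin 2) (Fin 2) (O π r)) (χ : (Mgrp π r ((r + 1) / 2)) →* ℂˣ),
      IsPsiChar π r ψ Atil χ →
      (charRep χ).IsConstituentOf (ρ.res (Mgrp π r ((r + 1) / 2)).subtype) →
      IsCyclicMat ((redMap π r (r / 2) (Nat.div_le_self r 2)).mapMatrix Atil)

/-- Conjugation `X ↦ t⁻¹ X t` as a homomorphism from the inertia group of the
conjugate character `χ^t` (intersected with a subgroup `S`, e.g. `SL_2`) to the
inertia group of `χ`. -/
def conjInertiaHom {G : Type} [Group G] (N : Subgroup G) [N.Normal] (S : Subgroup G)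
    (χ : N →* ℂˣ) (t : G) :
    ((inertia N (conjChar χ t)).subgroupOf S) →* (inertia N χ) where
  toFun x := ⟨t⁻¹ * (((x : S) : G)) * t,
    mem_inertia_conjChar.mp (Subgroup.mem_subgroupOf.mp x.2)⟩
  map_one' := by ext; simp
  map_mul' a b := by
    ext
    push_cast
    group

end Extra

/-- The diagonal matrix `diag(d, 1, …, 1)` as an element of `GL_n(R)`. -/
def diagGLn (R : Type) [CommRing R] (n : ℕ) (hn : 1 ≤ n) (d : Rˣ) : GL (Fin n) R where
  val := Matrix.diagonal (fun j => if j = (⟨0, hn⟩ : Fin n) then (d : R) else 1)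
  inv := Matrix.diagonal (fun j => if j = (⟨0, hn⟩ : Fin n) then ((d⁻¹ : Rˣ) : R) else 1)
  val_inv := by
    rw [Matrix.diagonal_mul_diagonal]
    have h : (fun j => (if j = (⟨0, hn⟩ : Fin n) then (d : R) else 1) *
        (if j = (⟨0, hn⟩ : Fin n) then ((d⁻¹ : Rˣ) : R) else 1)) = fun _ => (1 : R) := by
      funext j
      split_ifs <;> simp
    rw [h]
    exact Matrix.diagonal_one
  inv_val := by
    rw [Matrix.diagonal_mul_diagonal]
    have h : (fun j => (if j = (⟨0, hn⟩ : Fin n) then ((d⁻¹ : Rˣ) : R) else 1) *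
        (if j = (⟨0, hn⟩ : Fin n) then (d : R) else 1)) = fun _ => (1 : R) := by
      funext j
      split_ifs <;> simp
    rw [h]
    exact Matrix.diagonal_one


section MackeyAux

variable {G : Type} [Group G] {C S : Subgroup G} {ι : Type}
  {t : ι → G} {K : ι → Subgroup S} {φ : Rep' C} {hom : ∀ i, (K i) →* C}

set_option maxHeartbeats 1000000 in
lemma mackey_welldef
    (hhom : ∀ i (x : K i), ((hom i x : C) : G) = (t i)⁻¹ * ((x : S) : G) * t i)
    (hK : ∀ i (s : S), (t i)⁻¹ * (s : G) * t i ∈ C → s ∈ K i)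
    (i : ι) (F : (Rep'.ind (K i) (φ.res (hom i))).V)
    (c c' : C) (s s' : S)
    (heq : (c : G) * (t i)⁻¹ * (s : G) = (c' : G) * (t i)⁻¹ * (s' : G)) :
    φ.ρ c (F.1 s) = φ.ρ c' (F.1 s') := by
  have key : (t i)⁻¹ * ((s' : G) * (s : G)⁻¹) * (t i) = (c' : G)⁻¹ * (c : G) := by
    have h1 : (s' : G) = ((c' : G) * (t i)⁻¹)⁻¹ * ((c : G) * (t i)⁻¹ * (s : G)) := by
      rw [heq]; group
    rw [h1]; group
  have hmemS : (t i)⁻¹ * ((s' * s⁻¹ : S) : G) * (t i) ∈ C := by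
    push_cast
    rw [key]
    exact mul_mem (inv_mem c'.2) c.2
  have hKmem : (s' * s⁻¹ : S) ∈ K i := hK i _ hmemS
  have hF := F.2 ⟨s' * s⁻¹, hKmem⟩ s
  have e1 : ((⟨s' * s⁻¹, hKmem⟩ : K i) : S) * s = s' := by
    show s' * s⁻¹ * s = s'
    group
  rw [e1] at hF
  have e2 : hom i ⟨s' * s⁻¹, hKmem⟩ = c'⁻¹ * c := by
    apply Subtype.ext
    rw [hhom]
    push_cast
    exact key
  rw [hF]
  show φ.ρ c (F.1 s) = φ.ρ c' (φ.ρ (hom i ⟨s' * s⁻¹, hKmem⟩) (F.1 s))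
  rw [e2]
  show _ = (φ.ρ c' * φ.ρ (c'⁻¹ * c)) (F.1 s)
  rw [← _root_.map_mul, mul_inv_cancel_left]

set_option maxHeartbeats 1000000 in
/-- The forward Mackey map. -/
def mackeyFwd
    (hhom : ∀ i (x : K i), ((hom i x : C) : G) = (t i)⁻¹ * ((x : S) : G) * t i) :
    ((Rep'.ind C φ).res S.subtype).V →ₗ[ℂ]
      (Rep'.pi fun i => Rep'.ind (K i) (φ.res (hom i))).V where
  toFun f i := ⟨fun σ => f.1 ((t i)⁻¹ * (σ : G)), by
    intro h σ
    have hf := f.2 (hom i h) ((t i)⁻¹ * (σ : G))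
    have e : ((hom i h : C) : G) * ((t i)⁻¹ * (σ : G)) =
        (t i)⁻¹ * (((h : S) * σ : S) : G) := by
      rw [hhom]; push_cast; group
    show f.1 ((t i)⁻¹ * (((h : S) * σ : S) : G)) = _
    rw [← e]
    exact hf⟩
  map_add' f g := rfl
  map_smul' a f := rfl

set_option maxHeartbeats 1000000 in
/-- The backward Mackey map. -/
def mackeyBwd
    (hhom : ∀ i (x : K i), ((hom i x : C) : G) = (t i)⁻¹ * ((x : S) : G) * t i)
    (hK : ∀ i (s : S), (t i)⁻¹ * (s : G) * t i ∈ C → s ∈ K i)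
    (idx : G → ι) (cc : G → C) (ss : G → S)
    (hspec : ∀ g : G, g = (cc g : G) * (t (idx g))⁻¹ * (ss g : G))
    (huniq : ∀ (i j : ι) (c c' : C) (s s' : S),
      (c : G) * (t i)⁻¹ * (s : G) = (c' : G) * (t j)⁻¹ * (s' : G) → i = j) :
    (Rep'.pi fun i => Rep'.ind (K i) (φ.res (hom i))).V →ₗ[ℂ]
      ((Rep'.ind C φ).res S.subtype).V where
  toFun F := ⟨fun g => φ.ρ (cc g) ((F (idx g)).1 (ss g)), by
    intro h g
    have hi : idx ((h : G) * g) = idx g := by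
      refine huniq _ _ (cc ((h : G) * g)) (h * cc g) (ss ((h : G) * g)) (ss g) ?_
      rw [← hspec]
      push_cast
      conv_lhs => rw [hspec g]
      group
    have h2 : ((cc ((h : G) * g) : C) : G) * (t (idx g))⁻¹ * ((ss ((h : G) * g) : S) : G) =
        ((h * cc g : C) : G) * (t (idx g))⁻¹ * ((ss g : S) : G) := by
      have h3 := hspec ((h : G) * g)
      rw [hi] at h3
      rw [← h3]
      push_cast
      conv_lhs => rw [hspec g]
      group
    have hw := mackey_welldef hhom hK (idx g) (F (idx g)) (cc ((h : G) * g)) (h * cc g)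
      (ss ((h : G) * g)) (ss g) h2
    show φ.ρ (cc ((h : G) * g)) ((F (idx ((h : G) * g))).1 (ss ((h : G) * g))) =
      φ.ρ h (φ.ρ (cc g) ((F (idx g)).1 (ss g)))
    rw [hi, hw]
    show _ = (φ.ρ h * φ.ρ (cc g)) ((F (idx g)).1 (ss g))
    rw [← _root_.map_mul]⟩
  map_add' F F' := by
    apply Subtype.ext
    funext g
    show φ.ρ (cc g) (((F (idx g)).1 (ss g)) + ((F' (idx g)).1 (ss g))) = _
    exact _root_.map_add (φ.ρ (cc g)) _ _
  map_smul' a F := by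
    apply Subtype.ext
    funext g
    show φ.ρ (cc g) (a • ((F (idx g)).1 (ss g))) = _
    exact _root_.map_smul (φ.ρ (cc g)) a _

set_option maxHeartbeats 1000000 in
theorem mackey
    (hhom : ∀ i (x : K i), ((hom i x : C) : G) = (t i)⁻¹ * ((x : S) : G) * t i)
    (hK : ∀ i (s : S), (t i)⁻¹ * (s : G) * t i ∈ C → s ∈ K i)
    (hex : ∀ g : G, ∃ (i : ι) (c : C) (s : S), g = (c : G) * (t i)⁻¹ * (s : G))
    (huniq : ∀ (i j : ι) (c c' : C) (s s' : S),
      (c : G) * (t i)⁻¹ * (s : G) = (c' : G) * (t j)⁻¹ * (s' : G) → i = j) :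
    ((Rep'.ind C φ).res S.subtype).Iso
      (Rep'.pi fun i => Rep'.ind (K i) (φ.res (hom i))) := by
  classical
  choose idx cc ss hspec using hex
  refine ⟨LinearEquiv.ofLinear (mackeyFwd hhom)
    (mackeyBwd hhom hK idx cc ss hspec huniq) ?_ ?_, ?_⟩
  · -- Fwd ∘ Bwd = id
    apply LinearMap.ext
    intro F
    funext i
    apply Subtype.ext
    funext σ
    show φ.ρ (cc ((t i)⁻¹ * (σ : G)))
      ((F (idx ((t i)⁻¹ * (σ : G)))).1 (ss ((t i)⁻¹ * (σ : G)))) = (F i).1 σ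
    set g0 : G := (t i)⁻¹ * (σ : G) with hg0
    have hi : idx g0 = i := by
      refine huniq _ _ (cc g0) 1 (ss g0) σ ?_
      rw [← hspec]
      simp [hg0]
    have h2 : ((cc g0 : C) : G) * (t i)⁻¹ * ((ss g0 : S) : G) =
        (((1 : C)) : G) * (t i)⁻¹ * ((σ : S) : G) := by
      have h3 := hspec g0
      rw [hi] at h3
      rw [← h3, hg0]
      simp
    have hw := mackey_welldef hhom hK i (F i) (cc g0) 1 (ss g0) σ h2
    rw [hi, hw, _root_.map_one]
    rfl
  · -- Bwd ∘ Fwd = id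
    apply LinearMap.ext
    intro f
    apply Subtype.ext
    funext g
    show φ.ρ (cc g) (f.1 ((t (idx g))⁻¹ * ((ss g : S) : G))) = f.1 g
    rw [← f.2 (cc g) ((t (idx g))⁻¹ * ((ss g : S) : G))]
    congr 1
    rw [← mul_assoc, ← hspec g]
  · -- equivariance
    intro σ f
    funext i
    apply Subtype.ext
    funext τ
    show f.1 ((t i)⁻¹ * ((τ : S) : G) * ((σ : S) : G)) =
      f.1 ((t i)⁻¹ * (((τ * σ : S) : S) : G))
    push_cast
    rw [mul_assoc]

end MackeyAux

section GLAux

variable {R : Type} [CommRing R]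

lemma det_diagGL (d : Rˣ) : Matrix.GeneralLinearGroup.det (diagGL (R := R) d) = d := by
  apply Units.ext
  show Matrix.det (Matrix.diagonal ![(d : R), 1]) = (d : R)
  rw [Matrix.det_diagonal, Fin.prod_univ_two]
  simp

/-- The scalar matrix `d·I` as an element of `GL₂`. -/
def scalarGL (d : Rˣ) : GL (Fin 2) R where
  val := (d : R) • (1 : Matrix (Fin 2) (Fin 2) R)
  inv := ((d⁻¹ : Rˣ) : R) • (1 : Matrix (Fin 2) (Fin 2) R)
  val_inv := by
    rw [Matrix.smul_mul, Matrix.mul_smul, smul_smul, mul_one]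
    norm_cast
    simp
  inv_val := by
    rw [Matrix.smul_mul, Matrix.mul_smul, smul_smul, mul_one]
    norm_cast
    simp

lemma scalarGL_comm (d : Rˣ) (X : GL (Fin 2) R) : scalarGL d * X = X * scalarGL d := by
  apply Units.ext
  show ((d : R) • (1 : Matrix (Fin 2) (Fin 2) R)) * (X : Matrix (Fin 2) (Fin 2) R)
    = (X : Matrix (Fin 2) (Fin 2) R) * ((d : R) • 1)
  rw [Matrix.smul_mul, Matrix.mul_smul, one_mul, mul_one]

lemma det_scalarGL (d : Rˣ) :
    Matrix.GeneralLinearGroup.det (scalarGL (R := R) d) = d * d := by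
  apply Units.ext
  show Matrix.det ((d : R) • (1 : Matrix (Fin 2) (Fin 2) R)) = ((d * d : Rˣ) : R)
  rw [Matrix.det_smul, Matrix.det_one, mul_one, Fintype.card_fin]
  push_cast
  ring

lemma central_mem_inertia {G : Type} [Group G] (N : Subgroup G) (χ : N →* ℂˣ) (g : G)
    (hg : ∀ x : G, g * x = x * g) : g ∈ inertia N χ := by
  intro x
  have h : g * x * g⁻¹ = x := by rw [hg x]; group
  rw [h]

end GLAux

set_option maxHeartbeats 1000000 in
theorem statement10
    (o : Type) [CommRing o] [IsDomain o] [IsDiscreteValuationRing o]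
    (π : o) (hπ : Irreducible π)
    [Finite (IsLocalRing.ResidueField o)]
    (q : ℕ) (hq : Nat.card (IsLocalRing.ResidueField o) = q)
    (r : ℕ) (hr : 2 ≤ r)
    (ψ : AddChar (O π r) ℂ) (hψ : ψ ((Ounif π r) ^ (r - 1)) ≠ 1)
    (A : Matrix (Fin 2) (Fin 2) (O π (r / 2))) (hA : IsCyclicMat A)
    (Atil : Matrix (Fin 2) (Fin 2) (O π r))
    (hlift : (redMap π r (r / 2) (Nat.div_le_self r 2)).mapMatrix Atil = A)
    (ψA : (Mgrp π r ((r + 1) / 2)) →* ℂˣ) (hψA : IsPsiChar π r ψ Atil ψA)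
    (ρ : Rep' (GL (Fin 2) (O π r)))
    (hρ : MemIrrOver (Mgrp π r ((r + 1) / 2)) ψA ρ)
    (φ : Rep' (inertia (Mgrp π r ((r + 1) / 2)) ψA))
    (hφ : MemIrrOver ((Mgrp π r ((r + 1) / 2)).subgroupOf (inertia (Mgrp π r ((r + 1) / 2)) ψA))
      (ψA.comp (subgroupOfHom (Mgrp π r ((r + 1) / 2)) (inertia (Mgrp π r ((r + 1) / 2)) ψA))) φ)
    (hind : ρ.Iso (Rep'.ind (inertia (Mgrp π r ((r + 1) / 2)) ψA) φ))
    (D : Finset ((O π r)ˣ))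
    (hD : ∀ u : (O π r)ˣ, ∃! d, d ∈ D ∧
      u * d⁻¹ ∈ (inertia (Mgrp π r ((r + 1) / 2)) ψA).map Matrix.GeneralLinearGroup.det) :
    (ρ.res (SLsub (O π r) (Fin 2)).subtype).Iso
      (Rep'.pi (fun d : {d // d ∈ D} =>
        Rep'.ind ((inertia (Mgrp π r ((r + 1) / 2)) (conjChar ψA (diagGL (d : (O π r)ˣ)))).subgroupOf (SLsub (O π r) (Fin 2)))
          (φ.res (conjInertiaHom (Mgrp π r ((r + 1) / 2)) (SLsub (O π r) (Fin 2)) ψA (diagGL (d : (O π r)ˣ)))))) := by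
  classical
  have hsq : ∀ d : (O π r)ˣ, d * d ∈
      (inertia (Mgrp π r ((r + 1) / 2)) ψA).map
        (Matrix.GeneralLinearGroup.det (n := Fin 2) (R := O π r)) := fun d =>
    Subgroup.mem_map.mpr ⟨scalarGL d,
      central_mem_inertia (Mgrp π r ((r + 1) / 2)) ψA _ (fun x => scalarGL_comm d x),
      det_scalarGL d⟩
  have hex : ∀ g : GL (Fin 2) (O π r), ∃ (i : {d // d ∈ D})
      (c : inertia (Mgrp π r ((r + 1) / 2)) ψA) (s : SLsub (O π r) (Fin 2)),
      g = (c : GL (Fin 2) (O π r)) * (diagGL (i : (O π r)ˣ))⁻¹ * (s : GL (Fin 2) (O π r)) := by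
    intro g
    obtain ⟨d, ⟨hdD, hmem⟩, -⟩ := hD (Matrix.GeneralLinearGroup.det g)
    have h2 : Matrix.GeneralLinearGroup.det g * d ∈
        (inertia (Mgrp π r ((r + 1) / 2)) ψA).map
          (Matrix.GeneralLinearGroup.det (n := Fin 2) (R := O π r)) := by
      have e : Matrix.GeneralLinearGroup.det g * d =
          (Matrix.GeneralLinearGroup.det g * d⁻¹) * (d * d) := by group
      rw [e]
      exact mul_mem hmem (hsq d)
    obtain ⟨c, hcC, hcdet⟩ := Subgroup.mem_map.mp h2
    have hsmem : diagGL d * c⁻¹ * g ∈ SLsub (O π r) (Fin 2) := by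
      show _ ∈ (Matrix.GeneralLinearGroup.det (n := Fin 2) (R := O π r)).ker
      rw [MonoidHom.mem_ker, _root_.map_mul, _root_.map_mul, map_inv, det_diagGL, hcdet,
        _root_.mul_inv_rev]
      group
    refine ⟨⟨d, hdD⟩, ⟨c, hcC⟩, ⟨diagGL d * c⁻¹ * g, hsmem⟩, ?_⟩
    show g = c * (diagGL d)⁻¹ * (diagGL d * c⁻¹ * g)
    group
  have huniq : ∀ (i j : {d // d ∈ D}) (c c' : inertia (Mgrp π r ((r + 1) / 2)) ψA)
      (s s' : SLsub (O π r) (Fin 2)),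
      (c : GL (Fin 2) (O π r)) * (diagGL (i : (O π r)ˣ))⁻¹ * (s : GL (Fin 2) (O π r)) =
      (c' : GL (Fin 2) (O π r)) * (diagGL (j : (O π r)ˣ))⁻¹ * (s' : GL (Fin 2) (O π r)) →
      i = j := by
    intro i j c c' s s' heq
    have hdet := congrArg (Matrix.GeneralLinearGroup.det (n := Fin 2) (R := O π r)) heq
    rw [_root_.map_mul, _root_.map_mul, _root_.map_mul, _root_.map_mul, map_inv, map_inv,
      det_diagGL, det_diagGL, MonoidHom.mem_ker.mp s.2, MonoidHom.mem_ker.mp s'.2,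
      mul_one, mul_one] at hdet
    have hPi : (↑i : (O π r)ˣ) ∈ D ∧
        (Matrix.GeneralLinearGroup.det ((c : GL (Fin 2) (O π r))) * (↑i : (O π r)ˣ)⁻¹) *
          (↑i : (O π r)ˣ)⁻¹ ∈
        (inertia (Mgrp π r ((r + 1) / 2)) ψA).map
          (Matrix.GeneralLinearGroup.det (n := Fin 2) (R := O π r)) := by
      refine ⟨i.2, ?_⟩
      have e : (Matrix.GeneralLinearGroup.det ((c : GL (Fin 2) (O π r))) *
            (↑i : (O π r)ˣ)⁻¹) * (↑i : (O π r)ˣ)⁻¹ =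
          Matrix.GeneralLinearGroup.det ((c : GL (Fin 2) (O π r))) *
            ((↑i * ↑i : (O π r)ˣ))⁻¹ := by
        rw [_root_.mul_inv_rev]; group
      rw [e]
      exact mul_mem (Subgroup.mem_map.mpr ⟨(c : GL (Fin 2) (O π r)), c.2, rfl⟩)
        (inv_mem (hsq _))
    have hPj : (↑j : (O π r)ˣ) ∈ D ∧
        (Matrix.GeneralLinearGroup.det ((c : GL (Fin 2) (O π r))) * (↑i : (O π r)ˣ)⁻¹) *
          (↑j : (O π r)ˣ)⁻¹ ∈
        (inertia (Mgrp π r ((r + 1) / 2)) ψA).map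
          (Matrix.GeneralLinearGroup.det (n := Fin 2) (R := O π r)) := by
      refine ⟨j.2, ?_⟩
      have e : (Matrix.GeneralLinearGroup.det ((c : GL (Fin 2) (O π r))) *
            (↑i : (O π r)ˣ)⁻¹) * (↑j : (O π r)ˣ)⁻¹ =
          Matrix.GeneralLinearGroup.det ((c' : GL (Fin 2) (O π r))) *
            ((↑j * ↑j : (O π r)ˣ))⁻¹ := by
        rw [hdet, _root_.mul_inv_rev]; group
      rw [e]
      exact mul_mem (Subgroup.mem_map.mpr ⟨(c' : GL (Fin 2) (O π r)), c'.2, rfl⟩)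
        (inv_mem (hsq _))
    exact Subtype.ext ((hD _).unique hPi hPj)
  obtain ⟨e1, he1⟩ := mackey (G := GL (Fin 2) (O π r))
    (C := inertia (Mgrp π r ((r + 1) / 2)) ψA) (S := SLsub (O π r) (Fin 2))
    (ι := {d // d ∈ D})
    (t := fun i => diagGL (i : (O π r)ˣ))
    (K := fun i => (inertia (Mgrp π r ((r + 1) / 2))
      (conjChar ψA (diagGL (i : (O π r)ˣ)))).subgroupOf (SLsub (O π r) (Fin 2)))
    (φ := φ)
    (hom := fun i => conjInertiaHom (Mgrp π r ((r + 1) / 2)) (SLsub (O π r) (Fin 2)) ψA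
      (diagGL (i : (O π r)ˣ)))
    (fun i x => rfl)
    (fun i s h => Subgroup.mem_subgroupOf.mpr (mem_inertia_conjChar.mpr h))
    hex huniq
  obtain ⟨e0, he0⟩ := hind
  refine ⟨e0.trans e1, fun σ v => ?_⟩
  show e1 (e0 (ρ.ρ (σ : GL (Fin 2) (O π r)) v)) = _
  rw [he0 (σ : GL (Fin 2) (O π r)) v]
  exact he1 σ (e0 v)
end
end

section
/- Let r ≥ 2 and let A ∈ M_2(𝔬_{ℓ'}) be cyclic. Then the index of det(C_{GL_2(𝔬_r)}(ψ_A)) in 𝔬_r^× equals (q−1)q^{ℓ'−1}/|det(C_{GL_2(𝔬_{ℓ'})}(A))|; equivalently, |det(C_{GL_2(𝔬_r)}(ψ_A))| = |det(C_{GL_2(𝔬_{ℓ'})}(A))|·q^ℓ. -/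
open Matrix

noncomputable section

variable {o : Type} [CommRing o]

/-! The inertia group of `ψ_A` is the full preimage of the centralizer of `A` under reduction
`GL₂(𝔬_r) → GL₂(𝔬_{ℓ'})`. Indeed, conjugating `1 + π^ℓ B` by `g` multiplies `ψ_A` by
`ψ (π^ℓ tr ((g⁻¹ Ã g - Ã) B))`, and since `ψ` is primitive the trace pairing is nondegenerate,
so `g` fixes `ψ_A` iff `g⁻¹ Ã g ≡ Ã mod 𝔭^{ℓ'}`. As this reduction of `GL₂` is onto and
`diag(w, 1)` lies in its kernel whenever `w ≡ 1`, taking determinants turns the preimage of the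
centralizer into the preimage of `det C(A)` under `𝔬_r^× → 𝔬_{ℓ'}^×`, a surjection with kernel of
order `q^ℓ`; and `|𝔬_{ℓ'}^×| = (q - 1) q^{ℓ'-1}`. -/

section Counting

variable {G H : Type*} [Group G] [Group H]

theorem MonoidHom.card_eq_card_ker_mul_of_surjective (f : G →* H) (hf : Function.Surjective f) :
    Nat.card G = Nat.card f.ker * Nat.card H := by
  rw [← f.ker.card_mul_index, Subgroup.index_ker, f.range_eq_top.2 hf, Subgroup.card_top]

theorem Subgroup.card_comap_of_surjective [Finite H] {f : G →* H} (hf : Function.Surjective f)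
    (S : Subgroup H) : Nat.card (S.comap f) = Nat.card S * Nat.card f.ker := by
  refine Nat.eq_of_mul_eq_mul_right (Nat.pos_of_ne_zero S.index_ne_zero_of_finite) ?_
  calc Nat.card (S.comap f) * S.index = Nat.card G := by
        rw [← S.index_comap_of_surjective hf, card_mul_index]
    _ = Nat.card S * Nat.card f.ker * S.index := by
        rw [f.card_eq_card_ker_mul_of_surjective hf, ← S.card_mul_index]
        ring

end Counting

section LocalHom

variable {R S : Type} [CommRing R] [CommRing S]

theorem card_ker_unitsMap_eq_card_ker (f : R →+* S) [IsLocalHom f] :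
    Nat.card (Units.map (f : R →* S)).ker = Nat.card (RingHom.ker f) := by
  refine Nat.card_congr
    { toFun := fun u => ⟨((u : Rˣ) : R) - 1, ?_⟩
      invFun := fun x => ⟨(isUnit_of_map_unit f (1 + (x : R)) ?_).unit, ?_⟩
      left_inv := fun u => ?_
      right_inv := fun x => ?_ }
  · have hu : f ((u : Rˣ) : R) = 1 := congrArg Units.val u.2
    rw [RingHom.mem_ker, map_sub, hu, map_one, sub_self]
  · rw [map_add, map_one, x.2, add_zero]
    exact isUnit_one
  · ext
    simpa using RingHom.mem_ker.1 x.2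
  · ext
    simp
  · ext
    simp

theorem Matrix.GeneralLinearGroup.map_surjective {n : Type*} [Fintype n] [DecidableEq n]
    (f : R →+* S) [IsLocalHom f] (hf : Function.Surjective f) :
    Function.Surjective (GeneralLinearGroup.map (n := n) f) := by
  intro g
  set M : Matrix n n R := (g : Matrix n n S).map (Function.surjInv hf)
  have hM : f.mapMatrix M = g := by
    ext i j
    simp [M, Function.surjInv_eq hf]
  have hdet : IsUnit M.det := by
    apply isUnit_of_map_unit f
    rw [RingHom.map_det, hM]
    exact g.isUnit.map Matrix.detMonoidHom
  exact ⟨((Matrix.isUnit_iff_isUnit_det M).2 hdet).unit, Units.ext hM⟩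

theorem det_diagGL_s11 (d : Sˣ) : GeneralLinearGroup.det (diagGL d) = d := by
  ext
  simp [diagGL, GeneralLinearGroup.val_det_apply]

theorem diagGL_one : diagGL (1 : Sˣ) = 1 := by
  ext i j
  fin_cases i <;> fin_cases j <;> simp [diagGL]

theorem map_diagGL (f : R →+* S) (d : Rˣ) :
    GeneralLinearGroup.map f (diagGL d) = diagGL (Units.map (f : R →* S) d) := by
  ext i j
  fin_cases i <;> fin_cases j <;> simp [diagGL, GeneralLinearGroup.map_apply]

theorem map_det_comap_map (f : R →+* S)
    (hf : Function.Surjective (GeneralLinearGroup.map (n := Fin 2) f))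
    (C : Subgroup (GL (Fin 2) S)) :
    (C.comap (GeneralLinearGroup.map f)).map GeneralLinearGroup.det =
      (C.map GeneralLinearGroup.det).comap (Units.map (f : R →* S)) := by
  ext u
  simp only [Subgroup.mem_map, Subgroup.mem_comap]
  constructor
  · rintro ⟨g, hg, rfl⟩
    exact ⟨_, hg, GeneralLinearGroup.map_det f g⟩
  · rintro ⟨X, hX, hXu⟩
    obtain ⟨g, rfl⟩ := hf X
    set w := (GeneralLinearGroup.det g)⁻¹ * u
    have hw : Units.map (f : R →* S) w = 1 := by
      rw [map_mul, map_inv, ← hXu, GeneralLinearGroup.map_det, inv_mul_cancel]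
    refine ⟨g * diagGL w, ?_, ?_⟩
    · rwa [map_mul, map_diagGL, hw, diagGL_one, mul_one]
    · rw [map_mul, det_diagGL_s11, mul_inv_cancel_left]

end LocalHom

section Truncation

variable {π : o}

theorem redMap_surjective (r s : ℕ) (h : s ≤ r) : Function.Surjective (redMap π r s h) :=
  Ideal.Quotient.factor_surjective _

theorem Ounif_pow_eq_zero {m k : ℕ} (h : m ≤ k) : Ounif π m ^ k = 0 := by
  rw [Ounif, ← map_pow, Ideal.Quotient.eq_zero_iff_mem, Ideal.mem_span_singleton]
  exact pow_dvd_pow π h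

theorem nontrivial_O (hπ : ¬IsUnit π) {m : ℕ} (hm : 1 ≤ m) : Nontrivial (O π m) := by
  rwa [Ideal.Quotient.nontrivial_iff, ne_eq, Ideal.span_singleton_eq_top,
    isUnit_pow_iff (by omega)]

theorem isLocalHom_redMap [IsLocalRing o] (hπ : ¬IsUnit π) {r s : ℕ} (hs : 1 ≤ s)
    (h : s ≤ r) : IsLocalHom (redMap π r s h) :=
  have := nontrivial_O hπ hs
  have := nontrivial_O hπ (hs.trans h)
  have : IsLocalRing (O π r) := .of_surjective' _ Ideal.Quotient.mk_surjective
  .of_surjective _ (redMap_surjective r s h)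

theorem unitsMap_redMap_surjective [IsLocalRing o] (hπ : ¬IsUnit π) {r s : ℕ} (hs : 1 ≤ s)
    (h : s ≤ r) : Function.Surjective (Units.map (redMap π r s h : O π r →* O π s)) :=
  IsLocalRing.surjective_units_map_of_local_ringHom _ (redMap_surjective r s h)
    (isLocalHom_redMap hπ hs h)

theorem Ounif_pow_mul_eq_zero_iff [IsDomain o] (hπ : π ≠ 0) {r s t : ℕ} (hst : s + t = r)
    (c : O π r) : Ounif π r ^ s * c = 0 ↔ redMap π r t (by omega) c = 0 := by
  obtain ⟨a, rfl⟩ := Ideal.Quotient.mk_surjective c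
  simp only [Ounif, redMap, Ideal.Quotient.factor_mk, ← map_pow, ← map_mul,
    Ideal.Quotient.eq_zero_iff_mem, Ideal.mem_span_singleton, ← hst, pow_add]
  exact mul_dvd_mul_iff_left (pow_ne_zero s hπ)

theorem Ounif_pow_smul_eq_zero_iff [IsDomain o] (hπ : π ≠ 0) {n : Type} [Fintype n]
    [DecidableEq n] {r s t : ℕ} (hst : s + t = r) (C : Matrix n n (O π r)) :
    Ounif π r ^ s • C = 0 ↔ (redMap π r t (by omega)).mapMatrix C = 0 := by
  simp only [← Matrix.ext_iff, Matrix.smul_apply, smul_eq_mul, RingHom.mapMatrix_apply,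
    Matrix.map_apply, Matrix.zero_apply, Ounif_pow_mul_eq_zero_iff hπ hst]

/-- A nonzero `y ∈ 𝔬_r` divides `π^(r-1)`. -/
theorem isPrimitive_of_apply_Ounif_pow_ne_one [IsDomain o] [IsDiscreteValuationRing o]
    (hπ : Irreducible π) {r : ℕ} {ψ : AddChar (O π r) ℂ} (hψ : ψ (Ounif π r ^ (r - 1)) ≠ 1) :
    ψ.IsPrimitive := by
  intro y hy hshift
  obtain ⟨a, rfl⟩ := Ideal.Quotient.mk_surjective y
  have ha : ¬π ^ r ∣ a := by
    rwa [ne_eq, Ideal.Quotient.eq_zero_iff_mem, Ideal.mem_span_singleton] at hy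
  obtain ⟨n, u, rfl⟩ := IsDiscreteValuationRing.eq_unit_mul_pow_irreducible
    (show a ≠ 0 by rintro rfl; exact ha (dvd_zero _)) hπ
  have hn : n + (r - 1 - n) = r - 1 := by
    have : n < r := by
      by_contra! hrn
      exact ha ((pow_dvd_pow π hrn).mul_left _)
    omega
  apply hψ
  have := DFunLike.congr_fun hshift (Ideal.Quotient.mk _ ((u⁻¹ : oˣ) * π ^ (r - 1 - n)))
  rwa [AddChar.mulShift_apply, AddChar.one_apply, ← map_mul, mul_mul_mul_comm, Units.mul_inv,
    one_mul, ← pow_add, hn, map_pow] at this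

end Truncation

section Card

variable [IsDomain o] [IsDiscreteValuationRing o] {π : o} (hπ : Irreducible π) {q : ℕ}
  (hq : Nat.card (IsLocalRing.ResidueField o) = q)
include hπ hq

theorem card_O (m : ℕ) : Nat.card (O π m) = q ^ m := by
  show Nat.card (o ⧸ Ideal.span {π ^ m}) = _
  have hmax : IsLocalRing.maximalIdeal o ≠ ⊥ := by
    rw [hπ.maximalIdeal_eq, ne_eq, Ideal.span_singleton_eq_bot]
    exact hπ.ne_zero
  rw [← Ideal.span_singleton_pow, hπ.maximalIdeal_eq.symm, ← Submodule.cardQuot_apply,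
    cardQuot_pow_of_prime hmax, Submodule.cardQuot_apply, ← hq]
  rfl

theorem finite_O [Finite (IsLocalRing.ResidueField o)] (m : ℕ) : Finite (O π m) := by
  refine Nat.finite_of_card_ne_zero ?_
  rw [card_O hπ hq, ← hq]
  exact pow_ne_zero _ Nat.card_pos.ne'

theorem card_ker_redMap [Finite (IsLocalRing.ResidueField o)] {r s : ℕ} (h : s ≤ r) :
    Nat.card (redMap π r s h).toAddMonoidHom.ker = q ^ (r - s) := by
  have hq0 : 0 < q ^ s := by
    rw [← card_O hπ hq s]
    have := finite_O hπ hq s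
    exact Nat.card_pos
  refine Nat.eq_of_mul_eq_mul_right hq0 ?_
  set f := (redMap π r s h).toAddMonoidHom
  rw [← pow_add, Nat.sub_add_cancel h, ← card_O hπ hq, ← card_O hπ hq, ← f.ker.card_mul_index,
    AddSubgroup.index_ker, f.range_eq_top.2 (redMap_surjective r s h), AddSubgroup.card_top]

theorem card_ker_unitsMap_redMap [Finite (IsLocalRing.ResidueField o)] {r s : ℕ} (hs : 1 ≤ s)
    (h : s ≤ r) :
    Nat.card (Units.map (redMap π r s h : O π r →* O π s)).ker = q ^ (r - s) := by
  have := isLocalHom_redMap hπ.not_isUnit hs h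
  rw [card_ker_unitsMap_eq_card_ker, ← card_ker_redMap hπ hq h]
  rfl

theorem card_units_O [Finite (IsLocalRing.ResidueField o)] {m : ℕ} (hm : 1 ≤ m) :
    Nat.card (O π m)ˣ = (q - 1) * q ^ (m - 1) := by
  have hres : O π 1 ≃+* IsLocalRing.ResidueField o :=
    Ideal.quotEquivOfEq (by rw [pow_one, hπ.maximalIdeal_eq])
  rw [(Units.map (redMap π m 1 hm : O π m →* O π 1)).card_eq_card_ker_mul_of_surjective
      (unitsMap_redMap_surjective hπ.not_isUnit le_rfl hm),
    card_ker_unitsMap_redMap hπ hq le_rfl hm,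
    Nat.card_congr (Units.mapEquiv hres.toMulEquiv).toEquiv, Nat.card_units, hq, mul_comm]

end Card

section Inertia

theorem mem_inertia_iff_of_normal {G : Type} [Group G] {N : Subgroup G} [hN : N.Normal]
    {χ : N →* ℂˣ} {g : G} : g ∈ inertia N χ ↔ ∀ n : N, χ (MulAut.conjNormal g n) = χ n := by
  have hconj (n : N) : MulAut.conjNormal g n = ⟨g * n * g⁻¹, hN.conj_mem _ n.2 g⟩ :=
    Subtype.ext (MulAut.conjNormal_apply g n)
  refine ⟨fun hg n => Units.ext ?_, fun hg x => ?_⟩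
  · simpa [extChar, hN.conj_mem _ n.2 g, hconj] using hg n
  · by_cases hx : x ∈ N
    · simpa [extChar, hx, hN.conj_mem _ hx g, hconj] using congrArg Units.val (hg ⟨x, hx⟩)
    · have hgx : g * x * g⁻¹ ∉ N := fun h =>
        hx (by simpa [mul_assoc] using hN.conj_mem _ h g⁻¹)
      simp [extChar, hx, hgx]

theorem AddChar.IsPrimitive.forall_trace_mul_eq_one_iff {R R' n : Type} [CommRing R]
    [CommMonoid R'] [Fintype n] [DecidableEq n] {ψ : AddChar R R'} (hψ : ψ.IsPrimitive)
    (C : Matrix n n R) : (∀ B, ψ (trace (C * B)) = 1) ↔ C = 0 := by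
  refine ⟨fun h => ?_, fun h B => by
    rw [h, Matrix.zero_mul, trace_zero, AddChar.map_zero_eq_one]⟩
  ext i j
  by_contra hij
  refine hψ hij (AddChar.ext _ _ fun x => ?_)
  simpa [trace_mul_single, mul_comm] using h (Matrix.single j i x)

variable {π : o} {r : ℕ}

theorem exists_Mgrp_eq_one_add_smul (B : Matrix (Fin 2) (Fin 2) (O π r)) :
    ∃ n : Mgrp π r ((r + 1) / 2), ((n : GL (Fin 2) (O π r)) : Matrix (Fin 2) (Fin 2) (O π r)) =
      1 + Ounif π r ^ ((r + 1) / 2) • B := by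
  have hnil : IsNilpotent (Ounif π r ^ ((r + 1) / 2) • B) :=
    ⟨2, by rw [smul_pow, ← pow_mul, Ounif_pow_eq_zero (by omega), zero_smul]⟩
  exact ⟨⟨hnil.isUnit_one_add.unit, B, rfl⟩, rfl⟩

theorem IsPsiChar.apply_conjNormal {ψ : AddChar (O π r) ℂ}
    {Atil : Matrix (Fin 2) (Fin 2) (O π r)} {χ : Mgrp π r ((r + 1) / 2) →* ℂˣ}
    (hχ : IsPsiChar π r ψ Atil χ) (g : GL (Fin 2) (O π r)) (n : Mgrp π r ((r + 1) / 2))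
    {B : Matrix (Fin 2) (Fin 2) (O π r)}
    (hB : ((n : GL (Fin 2) (O π r)) : Matrix (Fin 2) (Fin 2) (O π r)) =
      1 + Ounif π r ^ ((r + 1) / 2) • B) :
    (χ (MulAut.conjNormal g n) : ℂ) =
      ψ (Ounif π r ^ ((r + 1) / 2) * trace (g⁻¹.val * Atil * g.val * B)) := by
  rw [hχ _ (g.val * B * g⁻¹.val)]
  · rw [trace_mul_comm, Matrix.mul_assoc, trace_mul_cycle]
  · rw [MulAut.conjNormal_apply, Units.val_mul, Units.val_mul, hB, Matrix.mul_add,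
      Matrix.add_mul, Matrix.mul_one, Units.mul_inv, Matrix.mul_smul, Matrix.smul_mul]

theorem mem_inertia_iff_forall_trace {ψ : AddChar (O π r) ℂ}
    {Atil : Matrix (Fin 2) (Fin 2) (O π r)} {χ : Mgrp π r ((r + 1) / 2) →* ℂˣ}
    (hχ : IsPsiChar π r ψ Atil χ) (g : GL (Fin 2) (O π r)) :
    g ∈ inertia (Mgrp π r ((r + 1) / 2)) χ ↔ ∀ B : Matrix (Fin 2) (Fin 2) (O π r),
      ψ (trace ((Ounif π r ^ ((r + 1) / 2) • (g⁻¹.val * Atil * g.val - Atil)) * B)) = 1 := by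
  set p := Ounif π r ^ ((r + 1) / 2)
  have hsplit (B : Matrix (Fin 2) (Fin 2) (O π r)) :
      ψ (p * trace (g⁻¹.val * Atil * g.val * B)) =
        ψ (trace ((p • (g⁻¹.val * Atil * g.val - Atil)) * B)) * ψ (p * trace (Atil * B)) := by
    rw [← AddChar.map_add_eq_mul, Matrix.smul_mul, trace_smul, Matrix.sub_mul, trace_sub,
      smul_eq_mul]
    congr 1
    ring
  rw [mem_inertia_iff_of_normal]
  refine ⟨fun hg B => ?_, fun h n => ?_⟩
  · obtain ⟨n, hn⟩ := exists_Mgrp_eq_one_add_smul B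
    have := congrArg Units.val (hg n)
    rwa [hχ.apply_conjNormal g n hn, hχ n B hn, hsplit,
      mul_eq_right₀ (ψ.val_isUnit _).ne_zero] at this
  · obtain ⟨B, hB⟩ := n.2
    ext
    rw [hχ.apply_conjNormal g n hB, hχ n B hB, hsplit, h B, one_mul]

theorem inertia_eq_comap_matCentralizer [IsDomain o] (hπ : π ≠ 0) {ψ : AddChar (O π r) ℂ}
    (hψ : ψ.IsPrimitive) {Atil : Matrix (Fin 2) (Fin 2) (O π r)}
    {χ : Mgrp π r ((r + 1) / 2) →* ℂˣ} (hχ : IsPsiChar π r ψ Atil χ) :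
    inertia (Mgrp π r ((r + 1) / 2)) χ =
      (matCentralizer (O π (r / 2))
        ((redMap π r (r / 2) (Nat.div_le_self r 2)).mapMatrix Atil)).comap
        (GeneralLinearGroup.map (redMap π r (r / 2) (Nat.div_le_self r 2))) := by
  ext g
  set f := redMap π r (r / 2) (Nat.div_le_self r 2)
  set g' := GeneralLinearGroup.map (n := Fin 2) f g
  have hconj : f.mapMatrix (g⁻¹.val * Atil * g.val - Atil) =
      g'⁻¹.val * f.mapMatrix Atil * g'.val - f.mapMatrix Atil := by
    rw [← GeneralLinearGroup.map_inv, map_sub, map_mul, map_mul]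
    rfl
  rw [mem_inertia_iff_forall_trace hχ, hψ.forall_trace_mul_eq_one_iff,
    Ounif_pow_smul_eq_zero_iff hπ (by omega : (r + 1) / 2 + r / 2 = r), hconj, sub_eq_zero,
    Matrix.mul_assoc, Units.inv_mul_eq_iff_eq_mul]
  exact Iff.rfl

end Inertia

theorem statement11_general
    (o : Type) [CommRing o] [IsDomain o] [IsDiscreteValuationRing o]
    (π : o) (hπ : Irreducible π)
    [Finite (IsLocalRing.ResidueField o)]
    (q : ℕ) (hq : Nat.card (IsLocalRing.ResidueField o) = q)
    (r : ℕ) (hr : 2 ≤ r)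
    (ψ : AddChar (O π r) ℂ) (hψ : ψ ((Ounif π r) ^ (r - 1)) ≠ 1)
    (A : Matrix (Fin 2) (Fin 2) (O π (r / 2)))
    (Atil : Matrix (Fin 2) (Fin 2) (O π r))
    (hlift : (redMap π r (r / 2) (Nat.div_le_self r 2)).mapMatrix Atil = A)
    (ψA : (Mgrp π r ((r + 1) / 2)) →* ℂˣ) (hψA : IsPsiChar π r ψ Atil ψA)
    :
    ((inertia (Mgrp π r ((r + 1) / 2)) ψA).map Matrix.GeneralLinearGroup.det).index * Nat.card ((matCentralizer (O π (r / 2)) A).map Matrix.GeneralLinearGroup.det) =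
      (q - 1) * q ^ (r / 2 - 1) ∧
    Nat.card ((inertia (Mgrp π r ((r + 1) / 2)) ψA).map Matrix.GeneralLinearGroup.det) =
      Nat.card ((matCentralizer (O π (r / 2)) A).map Matrix.GeneralLinearGroup.det) * q ^ ((r + 1) / 2) := by
  have hs : 1 ≤ r / 2 := by omega
  set f := redMap π r (r / 2) (Nat.div_le_self r 2)
  have := isLocalHom_redMap hπ.not_isUnit hs (Nat.div_le_self r 2)
  have := finite_O hπ hq (r / 2)
  have hdet : (inertia (Mgrp π r ((r + 1) / 2)) ψA).map GeneralLinearGroup.det =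
      ((matCentralizer (O π (r / 2)) A).map GeneralLinearGroup.det).comap
        (Units.map (f : O π r →* O π (r / 2))) := by
    rw [inertia_eq_comap_matCentralizer hπ.ne_zero
        (isPrimitive_of_apply_Ounif_pow_ne_one hπ hψ) hψA, hlift,
      map_det_comap_map f (GeneralLinearGroup.map_surjective f (redMap_surjective r _ _))]
  have hunits := unitsMap_redMap_surjective hπ.not_isUnit hs (Nat.div_le_self r 2)
  constructor
  · rw [hdet, Subgroup.index_comap_of_surjective _ hunits, Subgroup.index_mul_card,
      card_units_O hπ hq hs]
  · rw [hdet, Subgroup.card_comap_of_surjective hunits,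
      card_ker_unitsMap_redMap hπ hq hs (Nat.div_le_self r 2)]
    congr 2
    omega

theorem statement11
    (o : Type) [CommRing o] [IsDomain o] [IsDiscreteValuationRing o]
    (π : o) (hπ : Irreducible π)
    [Finite (IsLocalRing.ResidueField o)]
    (q : ℕ) (hq : Nat.card (IsLocalRing.ResidueField o) = q)
    (r : ℕ) (hr : 2 ≤ r)
    (ψ : AddChar (O π r) ℂ) (hψ : ψ ((Ounif π r) ^ (r - 1)) ≠ 1)
    (A : Matrix (Fin 2) (Fin 2) (O π (r / 2))) (hA : IsCyclicMat A)
    (Atil : Matrix (Fin 2) (Fin 2) (O π r))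
    (hlift : (redMap π r (r / 2) (Nat.div_le_self r 2)).mapMatrix Atil = A)
    (ψA : (Mgrp π r ((r + 1) / 2)) →* ℂˣ) (hψA : IsPsiChar π r ψ Atil ψA)
    :
    ((inertia (Mgrp π r ((r + 1) / 2)) ψA).map Matrix.GeneralLinearGroup.det).index * Nat.card ((matCentralizer (O π (r / 2)) A).map Matrix.GeneralLinearGroup.det) =
      (q - 1) * q ^ (r / 2 - 1) ∧
    Nat.card ((inertia (Mgrp π r ((r + 1) / 2)) ψA).map Matrix.GeneralLinearGroup.det) =
      Nat.card ((matCentralizer (O π (r / 2)) A).map Matrix.GeneralLinearGroup.det) * q ^ ((r + 1) / 2) :=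
  statement11_general o π hπ q hq r hr ψ hψ A Atil hlift ψA hψA
end
end
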